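/- Let m, n be integers. Then every 2×2 matrix whose four entries are 4m² + mn, 4m² − mn, n² + mn, n² − mn in some order has integer eigenvalues. -/

import Mathlib

/-- A 2×2 integer matrix has integer eigenvalues if its characteristic polynomial
splits over ℤ, i.e. there are integers λ₁, λ₂ with λ₁ + λ₂ = trace M and λ₁·λ₂ = det M. -/
def hasIntEigenvalues (M : Matrix (Fin 2) (Fin 2) ℤ) : Prop :=
  ∃ lam1 lam2 : ℤ, lam1 + lam2 = Matrix.trace M ∧ lam1 * lam2 = Matrix.det M

/-- The multiset of entries of a 2×2 integer matrix. -/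
def entriesMultiset (M : Matrix (Fin 2) (Fin 2) ℤ) : Multiset ℤ :=
  {M 0 0, M 0 1, M 1 0, M 1 1}

/-!
The four entries pair up as `A + D = B + C` with `A = 4m² + mn`, `D = n² − mn`,
`B = 4m² − mn`, `C = n² + mn`. If the pairs `{A, D}` and `{B, C}` sit in the two rows (or the
two columns), the row (column) sums agree and the common sum `4m² + n²` is an eigenvalue.
Otherwise one of the pairs is the diagonal, and `4m² ± 2mn` is an eigenvalue.
-/

section Eigenvalues

variable (M : Matrix (Fin 2) (Fin 2) ℤ)

theorem hasIntEigenvalues_of_sub_mul_sub_eq (l : ℤ)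
    (hl : (l - M 0 0) * (l - M 1 1) = M 0 1 * M 1 0) : hasIntEigenvalues M :=
  ⟨l, M 0 0 + M 1 1 - l, by rw [Matrix.trace_fin_two]; ring,
    by rw [Matrix.det_fin_two]; linear_combination -hl⟩

theorem hasIntEigenvalues_of_row_sum_eq (h : M 0 0 + M 0 1 = M 1 0 + M 1 1) :
    hasIntEigenvalues M :=
  hasIntEigenvalues_of_sub_mul_sub_eq M (M 0 0 + M 0 1) (by linear_combination (M 0 1) * h)

theorem hasIntEigenvalues_of_col_sum_eq (h : M 0 0 + M 1 0 = M 0 1 + M 1 1) :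
    hasIntEigenvalues M :=
  hasIntEigenvalues_of_sub_mul_sub_eq M (M 0 0 + M 1 0) (by linear_combination (M 1 0) * h)

variable {A B C D : ℤ}

theorem hasIntEigenvalues_of_apply_zero_zero_eq (hsum : A + D = B + C) {l : ℤ}
    (hl : (l - A) * (l - D) = B * C) (h00 : M 0 0 = A)
    (hrest : ({M 0 1, M 1 0, M 1 1} : Multiset ℤ) = {B, C, D}) : hasIntEigenvalues M := by
  have hrest_sum : M 0 1 + M 1 0 + M 1 1 = B + C + D := by
    simpa [add_assoc] using congrArg Multiset.sum hrest
  have hD : D ∈ ({M 0 1, M 1 0, M 1 1} : Multiset ℤ) := by rw [hrest]; simp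
  simp only [Multiset.insert_eq_cons, Multiset.mem_cons, Multiset.mem_singleton] at hD
  -- `D` shares a row with `A`, shares a column with it, or sits opposite it on the diagonal.
  rcases hD with hD | hD | hD
  · exact hasIntEigenvalues_of_row_sum_eq M (by linarith)
  · exact hasIntEigenvalues_of_col_sum_eq M (by linarith)
  · have hoff : ({M 0 1, M 1 0} : Multiset ℤ) = {B, C} :=
      add_right_cancel (b := {D}) (by simpa [hD] using hrest)
    have hprod : M 0 1 * M 1 0 = B * C := by simpa using congrArg Multiset.prod hoff
    exact hasIntEigenvalues_of_sub_mul_sub_eq M l (by rw [h00, ← hD, hl, hprod])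

theorem hasIntEigenvalues_of_entriesMultiset_eq (hsum : A + D = B + C) {l l' : ℤ}
    (hAD : (l - A) * (l - D) = B * C) (hBC : (l' - B) * (l' - C) = A * D)
    (h : entriesMultiset M = {A, B, C, D}) : hasIntEigenvalues M := by
  have hcons : M 0 0 ::ₘ {M 0 1, M 1 0, M 1 1} = {A, B, C, D} := h
  have hrest (X : ℤ) (s : Multiset ℤ) (h00 : M 0 0 = X)
      (hX : ({A, B, C, D} : Multiset ℤ) = X ::ₘ s) : {M 0 1, M 1 0, M 1 1} = s :=
    (Multiset.cons_inj_right X).mp (by rw [← h00, hcons, hX, h00])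
  have h00 : M 0 0 ∈ ({A, B, C, D} : Multiset ℤ) := by rw [← hcons]; simp
  simp only [Multiset.insert_eq_cons, Multiset.mem_cons, Multiset.mem_singleton] at h00
  rcases h00 with h00 | h00 | h00 | h00
  · exact hasIntEigenvalues_of_apply_zero_zero_eq M hsum hAD h00 (hrest A _ h00 rfl)
  · refine hasIntEigenvalues_of_apply_zero_zero_eq M (by linarith) hBC h00
      (hrest B {A, D, C} h00 ?_)
    simp only [Multiset.insert_eq_cons, ← Multiset.singleton_add]; abel
  · refine hasIntEigenvalues_of_apply_zero_zero_eq M (A := C) (B := A) (C := D) (D := B)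
      (l := l') (by linarith) (by linear_combination hBC) h00 (hrest C {A, D, B} h00 ?_)
    simp only [Multiset.insert_eq_cons, ← Multiset.singleton_add]; abel
  · refine hasIntEigenvalues_of_apply_zero_zero_eq M (A := D) (B := B) (C := C) (D := A)
      (l := l) (by linarith) (by linear_combination hAD) h00 (hrest D {B, C, A} h00 ?_)
    simp only [Multiset.insert_eq_cons, ← Multiset.singleton_add]; abel

end Eigenvalues

/-- For any integers m, n, every 2×2 matrix whose entries are
4m² + mn, 4m² − mn, n² + mn, n² − mn in some order has integer eigenvalues. -/
theorem stmt_11 (m n : ℤ) :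
    ∀ M : Matrix (Fin 2) (Fin 2) ℤ,
      entriesMultiset M =
        {4 * m ^ 2 + m * n, 4 * m ^ 2 - m * n, n ^ 2 + m * n, n ^ 2 - m * n} →
      hasIntEigenvalues M := fun M h =>
  hasIntEigenvalues_of_entriesMultiset_eq M (by ring) (l := 4 * m ^ 2 + 2 * m * n)
    (l' := 4 * m ^ 2 - 2 * m * n) (by ring) (by ring) h
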